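/- If a discrete distribution (p_k)_{k \geq 0} on nonnegative integers with p_0 > 0 is infinitely divisible, then the logarithmic derivative of its generating function P(z) = \sum_k p_k z^k has all nonnegative Taylor coefficients at 0: P'(z)/P(z) = \sum_{k \geq 0} r_k z^k with r_k \geq 0 for all k, for z \in [0,1). -/

import Mathlib

/-- Convolution of two sequences indexed by `ℕ`. -/
def seqConv (a b : ℕ → ℝ) : ℕ → ℝ :=
  fun k => ∑ i ∈ Finset.range (k + 1), a i * b (k - i)

/-- `n`-fold convolution power of a sequence. -/
def seqConvPow (q : ℕ → ℝ) : ℕ → (ℕ → ℝ)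
  | 0 => fun k => if k = 0 then 1 else 0
  | n + 1 => seqConv (seqConvPow q n) q

open PowerSeries Finset Filter Topology

/-!
If `p = q^{*n}`, then `P'/P = n Q'/Q`, so the coefficients `r` of `P'/P` are `n` times those of
`Q'/Q`. Multiplying the recursion `r'_k q₀ = (k+1) q_{k+1} - ∑_{i<k} r'_i q_{k-i}` for `Q'/Q` by `n`
gives `r_k q₀ ≥ -∑_{i<k} r_i q_{k-i}`; as `n q_j p₀ ≤ p_j` for `j ≥ 1`, the right side is `O(1/n)`,
and `n → ∞` gives `r_k ≥ 0`. Nonnegativity then bounds `r_k ≤ (k+1)/p₀`, so `∑ r_k z^k` converges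
for `|z| < 1` and the formal identity `R P = P'` can be evaluated at `z`.
-/

theorem mk_seqConv (a b : ℕ → ℝ) : mk (seqConv a b) = mk a * mk b := by
  ext k
  simp [seqConv, coeff_mul, Nat.sum_antidiagonal_eq_sum_range_succ_mk]

theorem mk_seqConvPow (q : ℕ → ℝ) (n : ℕ) : mk (seqConvPow q n) = mk q ^ n := by
  induction n with
  | zero => ext k; simp [seqConvPow, coeff_one]
  | succ n ih => rw [seqConvPow, mk_seqConv, ih, pow_succ]

theorem seqConvPow_apply (q : ℕ → ℝ) (n k : ℕ) : seqConvPow q n k = coeff k (mk q ^ n) := by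
  rw [← mk_seqConvPow, coeff_mk]

theorem seqConvPow_apply_zero (q : ℕ → ℝ) (n : ℕ) : seqConvPow q n 0 = q 0 ^ n := by
  simp [seqConvPow_apply, map_pow]

theorem seqConvPow_one (q : ℕ → ℝ) : seqConvPow q 1 = q := by
  ext k; simp [seqConvPow_apply]

theorem seqConv_nonneg {a b : ℕ → ℝ} (ha : ∀ k, 0 ≤ a k) (hb : ∀ k, 0 ≤ b k) (k : ℕ) :
    0 ≤ seqConv a b k :=
  sum_nonneg fun i _ => mul_nonneg (ha i) (hb _)

theorem seqConvPow_nonneg {q : ℕ → ℝ} (hq : ∀ k, 0 ≤ q k) (n k : ℕ) : 0 ≤ seqConvPow q n k := by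
  induction n generalizing k with
  | zero => simp only [seqConvPow]; split_ifs <;> norm_num
  | succ n ih => exact seqConv_nonneg ih hq k

theorem add_le_seqConv {a b : ℕ → ℝ} (ha : ∀ k, 0 ≤ a k) (hb : ∀ k, 0 ≤ b k) {j : ℕ}
    (hj : j ≠ 0) : a 0 * b j + a j * b 0 ≤ seqConv a b j := by
  have hsub : ({0, j} : Finset ℕ) ⊆ range (j + 1) := by
    intro i; simp only [mem_insert, mem_singleton, mem_range]; omega
  calc a 0 * b j + a j * b 0 = ∑ i ∈ {0, j}, a i * b (j - i) := by
        rw [sum_pair hj.symm, Nat.sub_zero, Nat.sub_self]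
    _ ≤ seqConv a b j := sum_le_sum_of_subset_of_nonneg hsub fun i _ _ => mul_nonneg (ha i) (hb _)

theorem succ_mul_mul_pow_le_seqConvPow {q : ℕ → ℝ} (hq : ∀ k, 0 ≤ q k) {j : ℕ} (hj : j ≠ 0)
    (n : ℕ) : (n + 1) * q j * q 0 ^ n ≤ seqConvPow q (n + 1) j := by
  induction n with
  | zero => simp [seqConvPow_one]
  | succ n ih =>
    calc ((n + 1 : ℕ) + 1 : ℝ) * q j * q 0 ^ (n + 1)
        = seqConvPow q (n + 1) 0 * q j + (n + 1) * q j * q 0 ^ n * q 0 := by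
          rw [seqConvPow_apply_zero]; push_cast; ring
      _ ≤ seqConvPow q (n + 1) 0 * q j + seqConvPow q (n + 1) j * q 0 := by
          gcongr; exact hq 0
      _ ≤ seqConvPow q (n + 2) j := add_le_seqConv (seqConvPow_nonneg hq _) hq hj

theorem mul_mul_le_seqConvPow {q : ℕ → ℝ} (hq : ∀ k, 0 ≤ q k) (hq01 : q 0 ≤ 1) {j : ℕ}
    (hj : j ≠ 0) (n : ℕ) : n * q j * seqConvPow q n 0 ≤ seqConvPow q n j := by
  rcases n with _ | n
  · simpa using seqConvPow_nonneg hq 0 j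
  calc ((n + 1 : ℕ) : ℝ) * q j * seqConvPow q (n + 1) 0 ≤ (n + 1) * q j * q 0 ^ n := by
        rw [seqConvPow_apply_zero, pow_succ, ← mul_assoc, Nat.cast_succ]
        exact mul_le_of_le_one_right
          (mul_nonneg (mul_nonneg (by positivity) (hq j)) (pow_nonneg (hq 0) n)) hq01
    _ ≤ seqConvPow q (n + 1) j := succ_mul_mul_pow_le_seqConvPow hq hj n

section LogDeriv

variable {K : Type*} [Field K]

theorem derivative_pow_mul_inv (Q : K⟦X⟧) (hQ : constantCoeff Q ≠ 0) (n : ℕ) :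
    d⁄dX K (Q ^ n) * (Q ^ n)⁻¹ = n * (d⁄dX K Q * Q⁻¹) := by
  rcases n with _ | n
  · simp
  have hQn : constantCoeff (Q ^ n) ≠ 0 := by rw [map_pow]; exact pow_ne_zero _ hQ
  rw [Derivation.leibniz_pow, pow_succ, PowerSeries.mul_inv_rev, nsmul_eq_mul, smul_eq_mul,
    Nat.add_sub_cancel]
  calc (↑(n + 1) : K⟦X⟧) * (Q ^ n * d⁄dX K Q) * (Q⁻¹ * (Q ^ n)⁻¹)
      = (↑(n + 1) : K⟦X⟧) * (d⁄dX K Q * Q⁻¹) * (Q ^ n * (Q ^ n)⁻¹) := by ring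
    _ = _ := by rw [PowerSeries.mul_inv_cancel _ hQn, mul_one]

noncomputable def logDerivCoeff (p : ℕ → K) : ℕ → K :=
  fun k => coeff k (d⁄dX K (mk p) * (mk p)⁻¹)

theorem mk_logDerivCoeff_mul {p : ℕ → K} (hp : p 0 ≠ 0) :
    mk (logDerivCoeff p) * mk p = d⁄dX K (mk p) := by
  have h : constantCoeff (mk p) ≠ 0 := by simpa using hp
  have hr : mk (logDerivCoeff p) = d⁄dX K (mk p) * (mk p)⁻¹ := by ext k; simp [logDerivCoeff]
  rw [hr, mul_assoc, PowerSeries.inv_mul_cancel _ h, mul_one]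

theorem sum_logDerivCoeff_mul {p : ℕ → K} (hp : p 0 ≠ 0) (k : ℕ) :
    ∑ i ∈ range (k + 1), logDerivCoeff p i * p (k - i) = (k + 1) * p (k + 1) := by
  have h := congrArg (coeff k) (mk_logDerivCoeff_mul hp)
  simp only [coeff_mul, Nat.sum_antidiagonal_eq_sum_range_succ_mk, coeff_mk,
    coeff_derivative] at h
  rw [h, mul_comm]

end LogDeriv

theorem logDerivCoeff_seqConvPow {q : ℕ → ℝ} (hq : q 0 ≠ 0) (n : ℕ) :
    logDerivCoeff (seqConvPow q n) = n * logDerivCoeff q := by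
  ext k
  have hQ : constantCoeff (mk q) ≠ 0 := by simpa using hq
  simp only [logDerivCoeff, mk_seqConvPow, derivative_pow_mul_inv _ hQ, Pi.mul_apply,
    Pi.natCast_apply]
  rw [← map_natCast (C (R := ℝ)), coeff_C_mul]

theorem nonneg_of_forall_neg_div_le {x C : ℝ} (h : ∀ n : ℕ, 0 < n → -(C / n) ≤ x) : 0 ≤ x := by
  have ht : Tendsto (fun n : ℕ => -(C / n)) atTop (𝓝 0) := by
    simpa using (tendsto_const_div_atTop_nhds_zero_nat C).neg
  exact le_of_tendsto ht (eventually_atTop.2 ⟨1, fun n hn => h n hn⟩)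

theorem neg_div_le_logDerivCoeff_mul {p q : ℕ → ℝ} {n : ℕ} (hn : 0 < n) (hq : ∀ k, 0 ≤ q k)
    (hq0 : 0 < q 0) (hq01 : q 0 ≤ 1) (hpq : p = seqConvPow q n) (k : ℕ) :
    -((∑ i ∈ range k, |logDerivCoeff p i| * p (k - i)) / p 0 / n) ≤ logDerivCoeff p k * q 0 := by
  have hr : logDerivCoeff p = n * logDerivCoeff q := hpq ▸ logDerivCoeff_seqConvPow hq0.ne' n
  set r := logDerivCoeff p
  have hp0 : 0 < p 0 := by rw [hpq, seqConvPow_apply_zero]; positivity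
  have hrec : r k * q 0 + ∑ i ∈ range k, r i * q (k - i) = n * ((k + 1) * q (k + 1)) := by
    rw [← sum_logDerivCoeff_mul hq0.ne' k, sum_range_succ, Nat.sub_self, mul_add, mul_sum, hr]
    simp only [Pi.mul_apply, Pi.natCast_apply, mul_assoc]
    ring
  have hterm : ∀ i ∈ range k, r i * q (k - i) ≤ |r i| * p (k - i) / p 0 / n := by
    intro i hi
    have hki : k - i ≠ 0 := by rw [mem_range] at hi; omega
    have hqp : n * q (k - i) * p 0 ≤ p (k - i) := by
      simpa only [hpq] using mul_mul_le_seqConvPow hq hq01 hki n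
    rw [div_div, le_div_iff₀ (by positivity)]
    calc r i * q (k - i) * (p 0 * n) ≤ |r i| * (n * q (k - i) * p 0) := by
          rw [show r i * q (k - i) * (p 0 * n) = r i * (n * q (k - i) * p 0) by ring]
          exact mul_le_mul_of_nonneg_right (le_abs_self _) (by have := hq (k - i); positivity)
      _ ≤ |r i| * p (k - i) := mul_le_mul_of_nonneg_left hqp (abs_nonneg _)
  have hrhs : 0 ≤ (n : ℝ) * ((k + 1) * q (k + 1)) := by have := hq (k + 1); positivity
  rw [sum_div, sum_div, neg_le]
  linarith [sum_le_sum hterm]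

theorem logDerivCoeff_nonneg_of_infDivisible {p : ℕ → ℝ} (h0 : 0 < p 0) (h01 : p 0 ≤ 1)
    (hID : ∀ n : ℕ, 0 < n → ∃ q : ℕ → ℝ, (∀ k, 0 ≤ q k) ∧ p = seqConvPow q n) (k : ℕ) :
    0 ≤ logDerivCoeff p k := by
  by_contra! hneg
  refine (mul_neg_of_neg_of_pos hneg h0).not_ge <| nonneg_of_forall_neg_div_le
    (C := (∑ i ∈ range k, |logDerivCoeff p i| * p (k - i)) / p 0) fun n hn => ?_
  obtain ⟨q, hq, hpq⟩ := hID n hn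
  have hq0n : q 0 ^ n = p 0 := by rw [hpq, seqConvPow_apply_zero]
  have hq0 : 0 < q 0 := (hq 0).lt_of_ne fun h => by
    rw [← h, zero_pow hn.ne'] at hq0n; exact h0.ne hq0n
  have hq01 : q 0 ≤ 1 := (pow_le_one_iff_of_nonneg (hq 0) hn.ne').1 (hq0n ▸ h01)
  have hpq0 : p 0 ≤ q 0 := hq0n ▸ pow_le_of_le_one (hq 0) hq01 hn.ne'
  calc _ ≤ logDerivCoeff p k * q 0 := neg_div_le_logDerivCoeff_mul hn hq hq0 hq01 hpq k
    _ ≤ logDerivCoeff p k * p 0 := mul_le_mul_of_nonpos_left hpq0 hneg.le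

section PowerSeriesEval

variable {𝕜 : Type*} [NormedField 𝕜]

theorem summable_norm_mul_pow_of_norm_le {a : ℕ → 𝕜} {C : ℝ} (ha : ∀ k, ‖a k‖ ≤ C * (k + 1))
    {z : 𝕜} (hz : ‖z‖ < 1) : Summable fun k => ‖a k * z ^ k‖ := by
  have hz' : ‖‖z‖‖ < 1 := by rwa [norm_norm]
  have hgeom : Summable fun k : ℕ => C * ((k + 1) * ‖z‖ ^ k) := by
    refine Summable.mul_left C ?_
    simpa [add_mul] using
      (summable_pow_mul_geometric_of_norm_lt_one 1 hz').add (summable_geometric_of_norm_lt_one hz')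
  refine hgeom.of_nonneg_of_le (fun _ => norm_nonneg _) fun k => ?_
  rw [norm_mul, norm_pow, ← mul_assoc]
  exact mul_le_mul_of_nonneg_right (ha k) (by positivity)

theorem tsum_mul_pow_mul_tsum_mul_pow [CompleteSpace 𝕜] {a b : ℕ → 𝕜} {z : 𝕜}
    (ha : Summable fun k => ‖a k * z ^ k‖) (hb : Summable fun k => ‖b k * z ^ k‖) :
    (∑' k, a k * z ^ k) * (∑' k, b k * z ^ k) = ∑' k, coeff k (mk a * mk b) * z ^ k := by
  rw [tsum_mul_tsum_eq_tsum_sum_antidiagonal_of_summable_norm ha hb]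
  refine tsum_congr fun n => ?_
  rw [coeff_mul, sum_mul]
  refine sum_congr rfl fun ij hij => ?_
  rw [HasAntidiagonal.mem_antidiagonal] at hij
  rw [coeff_mk, coeff_mk, ← hij, pow_add]
  ring

end PowerSeriesEval

theorem hasDerivAt_tsum_mul_pow {a : ℕ → ℝ} {M : ℝ} (ha : ∀ k, |a k| ≤ M) {z : ℝ}
    (hz : |z| < 1) :
    HasDerivAt (fun w => ∑' k, a k * w ^ k) (∑' k, a (k + 1) * (k + 1) * z ^ k) z := by
  set b := (|z| + 1) / 2
  have hzb : |z| < b := by simp only [b]; linarith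
  have hb0 : 0 < b := by simp only [b]; positivity
  have hb1 : ‖b‖ < 1 := by rw [Real.norm_eq_abs, abs_of_pos hb0]; simp only [b]; linarith
  set u : ℕ → ℝ := fun k => M / b * (k * b ^ k)
  have hu : Summable u := by
    simpa using (summable_pow_mul_geometric_of_norm_lt_one 1 hb1).mul_left (M / b)
  have hbound : ∀ k, ∀ y ∈ Metric.ball (0 : ℝ) b, |a k * (k * y ^ (k - 1))| ≤ u k := by
    intro k y hy
    rw [mem_ball_zero_iff, Real.norm_eq_abs] at hy
    have hpow : (k : ℝ) * b ^ (k - 1) = k * b ^ k / b := by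
      rcases k with _ | k
      · simp
      · rw [Nat.add_sub_cancel, pow_succ, mul_div_assoc, mul_div_cancel_right₀ _ hb0.ne']
    calc |a k * (k * y ^ (k - 1))| = |a k| * (k * |y| ^ (k - 1)) := by
          rw [abs_mul, abs_mul, abs_pow, Nat.abs_cast]
      _ ≤ M * (k * b ^ (k - 1)) := by gcongr; exacts [(abs_nonneg _).trans (ha 0), ha k]
      _ = u k := by simp only [u, hpow]; ring
  have hzball : z ∈ Metric.ball (0 : ℝ) b := by rwa [mem_ball_zero_iff, Real.norm_eq_abs]
  have hderiv := hasDerivAt_tsum_of_isPreconnected hu Metric.isOpen_ball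
    (convex_ball (0 : ℝ) b).isPreconnected
    (g := fun k w => a k * w ^ k) (g' := fun k w => a k * (k * w ^ (k - 1)))
    (fun k w _ => (hasDerivAt_pow k w).const_mul (a k)) hbound (Metric.mem_ball_self hb0)
    (summable_of_ne_finset_zero (s := {0}) fun k hk => by simp_all) hzball
  have hsum : Summable fun k : ℕ => a k * (k * z ^ (k - 1)) :=
    Summable.of_norm_bounded hu fun k => hbound k z hzball
  have hshift : ∑' k : ℕ, a k * (k * z ^ (k - 1)) = ∑' k : ℕ, a (k + 1) * (k + 1) * z ^ k := by
    rw [hsum.tsum_eq_zero_add]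
    simp [mul_assoc]
  rwa [hshift] at hderiv

theorem logDerivCoeff_le {p : ℕ → ℝ} (hnn : ∀ k, 0 ≤ p k) (hp1 : ∀ k, p k ≤ 1) (h0 : 0 < p 0)
    (hr : ∀ k, 0 ≤ logDerivCoeff p k) (k : ℕ) : logDerivCoeff p k ≤ (k + 1) / p 0 := by
  rw [le_div_iff₀ h0]
  calc logDerivCoeff p k * p 0 = logDerivCoeff p k * p (k - k) := by rw [Nat.sub_self]
    _ ≤ ∑ i ∈ range (k + 1), logDerivCoeff p i * p (k - i) :=
      single_le_sum (f := fun i => logDerivCoeff p i * p (k - i))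
        (fun i _ => mul_nonneg (hr i) (hnn _)) (self_mem_range_succ k)
    _ = (k + 1) * p (k + 1) := sum_logDerivCoeff_mul h0.ne' k
    _ ≤ k + 1 := mul_le_of_le_one_right (by positivity) (hp1 _)

/-- If a discrete distribution `(p_k)` on `ℕ` with `p₀ > 0` is infinitely
divisible, then the logarithmic derivative of its generating function
`P(z) = ∑ p_k z^k` has all nonnegative Taylor coefficients at `0`:
`P'(z)/P(z) = ∑ r_k z^k` with `r_k ≥ 0`, for `z ∈ [0,1)`. -/
theorem log_deriv_nonneg_coeffs_of_infDivisible (p : ℕ → ℝ)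
    (hnn : ∀ k, 0 ≤ p k) (hsum : ∑' k, p k = 1) (h0 : 0 < p 0)
    (hID : ∀ n : ℕ, 0 < n → ∃ q : ℕ → ℝ,
      (∀ k, 0 ≤ q k) ∧ (∑' k, q k = 1) ∧ p = seqConvPow q n) :
    ∃ r : ℕ → ℝ, (∀ k, 0 ≤ r k) ∧
      ∀ z ∈ Set.Ico (0 : ℝ) 1,
        deriv (fun w : ℝ => ∑' k, p k * w ^ k) z / (∑' k, p k * z ^ k) =
          ∑' k, r k * z ^ k := by
  have hsm : Summable p := by
    by_contra h
    simp [tsum_eq_zero_of_not_summable h] at hsum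
  have hp1 : ∀ k, p k ≤ 1 := fun k => hsum ▸ hsm.le_tsum k fun j _ => hnn j
  have habs : ∀ k, |p k| ≤ 1 := fun k => by rw [abs_of_nonneg (hnn k)]; exact hp1 k
  have hr : ∀ k, 0 ≤ logDerivCoeff p k := logDerivCoeff_nonneg_of_infDivisible h0 (hp1 0)
    fun n hn => (hID n hn).imp fun _ hq => ⟨hq.1, hq.2.2⟩
  refine ⟨logDerivCoeff p, hr, fun z ⟨hz0, hz1⟩ => ?_⟩
  have hz : |z| < 1 := by rwa [abs_of_nonneg hz0]
  have hpz : Summable fun k => ‖p k * z ^ k‖ :=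
    summable_norm_mul_pow_of_norm_le (C := 1) (fun k => by
      rw [Real.norm_eq_abs]; have := habs k; linarith [k.cast_nonneg (α := ℝ)]) hz
  have hrz : Summable fun k => ‖logDerivCoeff p k * z ^ k‖ :=
    summable_norm_mul_pow_of_norm_le (C := (p 0)⁻¹) (fun k => by
      rw [Real.norm_eq_abs, abs_of_nonneg (hr k), ← div_eq_inv_mul]
      exact logDerivCoeff_le hnn hp1 h0 hr k) hz
  have hP : 0 < ∑' k, p k * z ^ k := by
    refine h0.trans_le ?_
    simpa using hpz.of_norm.le_tsum 0 fun k _ => mul_nonneg (hnn k) (pow_nonneg hz0 k)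
  rw [(hasDerivAt_tsum_mul_pow habs hz).deriv, div_eq_iff hP.ne',
    tsum_mul_pow_mul_tsum_mul_pow hrz hpz, mk_logDerivCoeff_mul h0.ne']
  simp [coeff_derivative]
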